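/- Let x* be a strict Nash equilibrium of a finite N-player game, let a > 0 and M > 0 be such that v_{i s*_i}(x) − v_{i s_i}(x) ≥ a for all x ∈ U_M, all s_i ≠ s*_i and all i. If the HEDGE algorithm with perfect mixed payoff observations is run with a constant step-size γ_t = γ > 0 and initialized in U_M, then ‖x(t) − x*‖ = O(e^{−aγt}), i.e. there exists C > 0 with ‖x(t) − x*‖ ≤ C e^{−aγt} for all t. -/

import Mathlib

open Real Finset Filter Topology

noncomputable section

/-- Payoff to player `i` of pure strategy `b` against the mixed profile `x` of the
other players. -/
def purePay {N : ℕ} (S : Fin N → Type*) [∀ i, Fintype (S i)] [∀ i, DecidableEq (S i)]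
    (u : ∀ _ : Fin N, (∀ j, S j) → ℝ) (i : Fin N) (b : S i) (x : ∀ j, S j → ℝ) : ℝ :=
  ∑ s : ∀ j, S j, if s i = b then u i s * ∏ j ∈ univ.erase i, x j (s j) else 0

/-- The logit (exponential weights) map. -/
def logit {α : Type*} [Fintype α] (y : α → ℝ) : α → ℝ :=
  fun a => Real.exp (y a) / ∑ b, Real.exp (y b)

/-- `U_M = { x = Λ(y) : y_{i s_i} − y_{i s*_i} ≤ −M for all s_i ≠ s*_i, all i }`. -/
def inUM {N : ℕ} (S : Fin N → Type*) [∀ i, Fintype (S i)]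
    (sstar : ∀ i, S i) (M : ℝ) (x : ∀ i, S i → ℝ) : Prop :=
  ∃ y : ∀ i, S i → ℝ, (∀ i, x i = logit (y i)) ∧
    ∀ i, ∀ b : S i, b ≠ sstar i → y i b - y i (sstar i) ≤ -M

/-!
Along HEDGE, each score gap `y_{i b} - y_{i s*_i}` drops by at least `aγ` per step as long as
`x ∈ U_M`, and a gap of at most `-M` keeps `x` in `U_M`; by induction the gap at time `t` is at
most `-(M + aγ(t - 1))`. The logit map turns a gap of `-m` into weight at most `e^{-m}` on each
`b ≠ s*_i`, and the L¹ distance of a probability vector to the vertex `s*_i` is twice its mass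
off that vertex.
-/

section Logit

variable {α : Type*} [Fintype α]

lemma sum_exp_pos [Nonempty α] (y : α → ℝ) : 0 < ∑ b, exp (y b) :=
  Finset.sum_pos (fun _ _ => exp_pos _) univ_nonempty

lemma logit_pos (y : α → ℝ) (a : α) : 0 < logit y a :=
  have : Nonempty α := ⟨a⟩
  div_pos (exp_pos _) (sum_exp_pos y)

lemma sum_logit [Nonempty α] (y : α → ℝ) : ∑ a, logit y a = 1 := by
  simp only [logit]
  rw [← Finset.sum_div, div_self (sum_exp_pos y).ne']

lemma logit_div_logit (y : α → ℝ) (a c : α) : logit y a / logit y c = exp (y a - y c) := by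
  have : Nonempty α := ⟨a⟩
  simp only [logit]
  rw [div_div_div_cancel_right₀ (sum_exp_pos y).ne', exp_sub]

lemma sub_eq_sub_of_logit_eq {y y' : α → ℝ} (h : logit y = logit y') (a c : α) :
    y a - y c = y' a - y' c :=
  exp_injective <| by rw [← logit_div_logit, ← logit_div_logit, h]

lemma logit_le_exp_sub (y : α → ℝ) (a c : α) : logit y a ≤ exp (y a - y c) := by
  have : Nonempty α := ⟨a⟩
  rw [exp_sub]
  exact div_le_div_of_nonneg_left (exp_pos _).le (exp_pos _)
    (single_le_sum (fun b _ => (exp_pos (y b)).le) (mem_univ c))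

lemma sum_abs_sub_ite_eq [DecidableEq α] {p : α → ℝ} (hp : ∀ a, 0 ≤ p a)
    (hp₁ : ∑ a, p a = 1) (c : α) :
    ∑ a, |p a - if a = c then 1 else 0| = 2 * ∑ a ∈ univ.erase c, p a := by
  have hsplit := add_sum_erase univ p (mem_univ c)
  have hoff : ∑ a ∈ univ.erase c, |p a - if a = c then 1 else 0| = ∑ a ∈ univ.erase c, p a :=
    sum_congr rfl fun a ha => by rw [if_neg (ne_of_mem_erase ha), sub_zero, abs_of_nonneg (hp a)]
  have hoff_nonneg : 0 ≤ ∑ a ∈ univ.erase c, p a := sum_nonneg fun a _ => hp a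
  rw [← add_sum_erase _ _ (mem_univ c), hoff, if_pos rfl, abs_of_nonpos (by linarith)]
  linarith

lemma sum_abs_logit_sub_ite_le [DecidableEq α] (y : α → ℝ) (c : α) (m : ℝ)
    (hy : ∀ b, b ≠ c → y b - y c ≤ -m) :
    ∑ a, |logit y a - if a = c then 1 else 0| ≤ 2 * Fintype.card α * exp (-m) := by
  have : Nonempty α := ⟨c⟩
  rw [sum_abs_sub_ite_eq (fun a => (logit_pos y a).le) (sum_logit y), mul_assoc]
  gcongr
  calc ∑ a ∈ univ.erase c, logit y a ≤ ∑ _a ∈ univ.erase c, exp (-m) :=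
        sum_le_sum fun a ha => (logit_le_exp_sub y a c).trans
          (exp_le_exp.mpr (hy a (ne_of_mem_erase ha)))
    _ ≤ Fintype.card α * exp (-m) := by
        rw [sum_const, nsmul_eq_mul]
        gcongr
        exact_mod_cast card_le_univ _

end Logit

section ScoresLag

variable {ι : Type*} {S : ι → Type*}

def ScoresLag (s : ∀ i, S i) (m : ℝ) (y : ∀ i, S i → ℝ) : Prop :=
  ∀ i, ∀ b : S i, b ≠ s i → y i b - y i (s i) ≤ -m

variable {s : ∀ i, S i} {m : ℝ} {y : ∀ i, S i → ℝ}

lemma ScoresLag.mono {m' : ℝ} (h : ScoresLag s m y) (hm : m' ≤ m) : ScoresLag s m' y :=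
  fun i b hb => (h i b hb).trans (neg_le_neg hm)

lemma ScoresLag.step {a γ : ℝ} {v y' : ∀ i, S i → ℝ} (h : ScoresLag s m y) (hγ : 0 ≤ γ)
    (hv : ∀ i, ∀ b : S i, b ≠ s i → a ≤ v i (s i) - v i b)
    (hy' : ∀ i b, y' i b = y i b + γ * v i b) : ScoresLag s (m + a * γ) y' := by
  intro i b hb
  rw [hy', hy']
  nlinarith [h i b hb, hv i b hb]

lemma scoresLag_add_mul_of_step {a γ : ℝ} {y v : ℕ → ∀ i, S i → ℝ} (ha : 0 ≤ a) (hγ : 0 ≤ γ)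
    (h₀ : ScoresLag s m (y 0))
    (hv : ∀ n, ScoresLag s m (y n) → ∀ i, ∀ b : S i, b ≠ s i → a ≤ v n i (s i) - v n i b)
    (hy : ∀ n i b, y (n + 1) i b = y n i b + γ * v n i b) (n : ℕ) :
    ScoresLag s (m + a * γ * n) (y n) := by
  induction n with
  | zero => simpa using h₀
  | succ n ih =>
    have hgap := hv n (ih.mono (le_add_of_nonneg_right (by positivity)))
    convert ih.step hγ hgap (hy n) using 1
    push_cast
    ring

end ScoresLag

lemma scoresLag_of_inUM {N : ℕ} {S : Fin N → Type*} [∀ i, Fintype (S i)] {s : ∀ i, S i}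
    {M : ℝ} {x y : ∀ i, S i → ℝ} (hx : inUM S s M x) (hxy : ∀ i, x i = logit (y i)) :
    ScoresLag s M y := by
  obtain ⟨y₀, hxy₀, hlag⟩ := hx
  intro i b hb
  rw [sub_eq_sub_of_logit_eq ((hxy i).symm.trans (hxy₀ i)) b (s i)]
  exact hlag i b hb

theorem hedge_perfect_info_constant_step_rate_general
    {N : ℕ} (S : Fin N → Type*) [∀ i, Fintype (S i)] [∀ i, DecidableEq (S i)]
    (u : ∀ _ : Fin N, (∀ j, S j) → ℝ)
    (sstar : ∀ i, S i)
    (a M γ : ℝ) (ha : 0 < a) (hγ : 0 < γ)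
    (hgap : ∀ x : ∀ i, S i → ℝ, inUM S sstar M x →
      ∀ i, ∀ b : S i, b ≠ sstar i →
        purePay S u i (sstar i) x - purePay S u i b x ≥ a)
    (y : ℕ → ∀ i, S i → ℝ) (x : ℕ → ∀ i, S i → ℝ)
    (hx : ∀ t, 1 ≤ t → ∀ i, x t i = logit (y t i))
    (hrec : ∀ t, 1 ≤ t → ∀ i, ∀ b : S i,
      y (t + 1) i b = y t i b + γ * purePay S u i b (x t))
    (hinit : inUM S sstar M (x 1)) :
    ∃ C : ℝ, 0 < C ∧ ∀ t : ℕ, 1 ≤ t →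
      ∑ i, ∑ b, |x t i b - (if b = sstar i then 1 else 0)| ≤
        C * Real.exp (-(a * γ * t)) := by
  have hlag (n : ℕ) : ScoresLag sstar (M + a * γ * n) (y (n + 1)) :=
    scoresLag_add_mul_of_step ha.le hγ.le (scoresLag_of_inUM hinit (hx 1 le_rfl))
      (fun k hk => hgap _ ⟨y (k + 1), hx (k + 1) k.succ_pos, hk⟩)
      (fun k => hrec (k + 1) k.succ_pos) n
  set K : ℝ := ∑ i, (Fintype.card (S i) : ℝ)
  refine ⟨(2 * K + 1) * exp (a * γ - M), by positivity, fun t ht => ?_⟩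
  obtain ⟨n, rfl⟩ := Nat.exists_eq_add_of_le' ht
  calc ∑ i, ∑ b, |x (n + 1) i b - if b = sstar i then 1 else 0|
      ≤ ∑ i, 2 * (Fintype.card (S i) : ℝ) * exp (-(M + a * γ * n)) :=
        sum_le_sum fun i _ => by
          rw [hx (n + 1) n.succ_pos i]
          exact sum_abs_logit_sub_ite_le _ _ _ (hlag n i)
    _ = 2 * K * (exp (a * γ - M) * exp (-(a * γ * ↑(n + 1)))) := by
        rw [← sum_mul, ← mul_sum, ← exp_add]
        push_cast [K]
        ring_nf
    _ ≤ (2 * K + 1) * exp (a * γ - M) * exp (-(a * γ * ↑(n + 1))) := by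
        rw [← mul_assoc]
        gcongr
        linarith

/-- Deterministic HEDGE with a constant step-size `γ`, started in `U_M` near a strict
equilibrium, satisfies `‖x(t) − x*‖ = O(e^{−aγt})`. -/
theorem hedge_perfect_info_constant_step_rate
    {N : ℕ} (S : Fin N → Type*) [∀ i, Fintype (S i)] [∀ i, DecidableEq (S i)]
    (u : ∀ _ : Fin N, (∀ j, S j) → ℝ)
    (sstar : ∀ i, S i)
    (hstrict : ∀ i, ∀ b : S i, b ≠ sstar i →
      u i (Function.update sstar i b) < u i sstar)
    (a M γ : ℝ) (ha : 0 < a) (hM : 0 < M) (hγ : 0 < γ)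
    (hgap : ∀ x : ∀ i, S i → ℝ, inUM S sstar M x →
      ∀ i, ∀ b : S i, b ≠ sstar i →
        purePay S u i (sstar i) x - purePay S u i b x ≥ a)
    (y : ℕ → ∀ i, S i → ℝ) (x : ℕ → ∀ i, S i → ℝ)
    (hx : ∀ t, 1 ≤ t → ∀ i, x t i = logit (y t i))
    (hrec : ∀ t, 1 ≤ t → ∀ i, ∀ b : S i,
      y (t + 1) i b = y t i b + γ * purePay S u i b (x t))
    (hinit : inUM S sstar M (x 1)) :
    ∃ C : ℝ, 0 < C ∧ ∀ t : ℕ, 1 ≤ t →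
      ∑ i, ∑ b, |x t i b - (if b = sstar i then 1 else 0)| ≤
        C * Real.exp (-(a * γ * t)) :=
  hedge_perfect_info_constant_step_rate_general S u sstar a M γ ha hγ hgap y x hx hrec hinit
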